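/- arXiv:2012.14051 — 2 statements merged into one kernel-verified Lean document; each statement's English description precedes it below -/
import Mathlib

section
/- Let M, K ≥ 1 be integers, let m_1, …, m_M be integers (sensor positions), and for θ ∈ [−π/2, π/2]^K let A(θ) ∈ ℂ^{M×K} be the steering matrix with entries A(θ)_{j,k} = exp(iπ m_j sin θ_k). For p ∈ ℝ_{>0}^K and σ² > 0 define R(θ, p, σ²) = A(θ) diag(p) A(θ)^H + σ² I_M and the normalized covariance R̄(θ, p, σ²) = R(θ, p, σ²) / (σ² + Σ_{k=1}^K p_k). Then for any θ, θ̆ ∈ [−π/2, π/2]^K the following are equivalent: (i) there exist p, p̆ ∈ ℝ_{>0}^K and σ², σ̆² > 0 with R̄(θ, p, σ²) = R̄(θ̆, p̆, σ̆²); (ii) there exist q, q̆ ∈ ℝ_{>0}^K and τ², τ̆² > 0 with R(θ, q, τ²) = R(θ̆, q̆, τ̆²). (This is the deterministic core of Theorem 1: the identifiability of DoAs from one-bit data, whose distribution is determined by the normalized covariance, is equivalent to identifiability from unquantized data, whose distribution is determined by the unnormalized covariance.) -/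
open Matrix Complex Real

/-- Steering matrix of an `M`-element sparse linear array with integer element
positions `m`, evaluated at DoAs `θ`: entries `exp(iπ m_j sin θ_k)`. -/
noncomputable def steering (M K : ℕ) (m : Fin M → ℤ) (θ : Fin K → ℝ) :
    Matrix (Fin M) (Fin K) ℂ :=
  Matrix.of fun j k =>
    Complex.exp (Complex.I * (Real.pi : ℂ) * (m j : ℂ) * (Real.sin (θ k) : ℂ))

/-- Unquantized covariance matrix `R(θ, p, σ²) = A(θ) diag(p) A(θ)ᴴ + σ² I`. -/
noncomputable def covR (M K : ℕ) (m : Fin M → ℤ) (θ : Fin K → ℝ)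
    (p : Fin K → ℝ) (σ2 : ℝ) : Matrix (Fin M) (Fin M) ℂ :=
  steering M K m θ * Matrix.diagonal (fun k => (p k : ℂ)) * (steering M K m θ)ᴴ
    + (σ2 : ℂ) • (1 : Matrix (Fin M) (Fin M) ℂ)

/-- Normalized covariance matrix `R̄(θ, p, σ²) = R(θ, p, σ²)/(σ² + Σ_k p_k)`. -/
noncomputable def covRbar (M K : ℕ) (m : Fin M → ℤ) (θ : Fin K → ℝ)
    (p : Fin K → ℝ) (σ2 : ℝ) : Matrix (Fin M) (Fin M) ℂ :=
  ((σ2 + ∑ k, p k : ℝ) : ℂ)⁻¹ • covR M K m θ p σ2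

lemma covR_smul (M K : ℕ) (m : Fin M → ℤ) (θ : Fin K → ℝ) (p : Fin K → ℝ) (σ2 c : ℝ) :
    covR M K m θ (fun k => c * p k) (c * σ2) = (c:ℂ) • covR M K m θ p σ2 := by
  unfold covR
  rw [smul_add]
  congr 1
  · have h : (Matrix.diagonal fun k => ((c * p k : ℝ):ℂ))
        = (c:ℂ) • Matrix.diagonal (fun k => ((p k : ℝ):ℂ)) := by
      funext a b
      by_cases hab : a = b <;>
        simp [Matrix.diagonal_apply, hab, Matrix.smul_apply, smul_eq_mul]
    rw [h, Matrix.mul_smul, Matrix.smul_mul]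
  · push_cast; rw [smul_smul]

lemma steering_mul_star (M K : ℕ) (m : Fin M → ℤ) (θ : Fin K → ℝ) (j : Fin M) (k : Fin K) :
    steering M K m θ j k * star (steering M K m θ j k) = 1 := by
  unfold steering
  simp only [Matrix.of_apply]
  rw [show (star (Complex.exp (Complex.I * (Real.pi:ℂ) * (m j : ℂ) * (Real.sin (θ k):ℂ))))
      = (starRingEnd ℂ) (Complex.exp (Complex.I * (Real.pi:ℂ) * (m j : ℂ) * (Real.sin (θ k):ℂ))) from rfl]
  rw [← Complex.exp_conj, ← Complex.exp_add, ← Complex.exp_zero]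
  congr 1
  have : (starRingEnd ℂ) (Complex.I * (Real.pi:ℂ) * (m j : ℂ) * (Real.sin (θ k):ℂ))
      = -(Complex.I * (Real.pi:ℂ) * (m j : ℂ) * (Real.sin (θ k):ℂ)) := by
    simp only [_root_.map_mul, Complex.conj_I, Complex.conj_ofReal, map_intCast]
    ring
  rw [this]; ring

lemma trace_covR (M K : ℕ) (m : Fin M → ℤ) (θ : Fin K → ℝ) (p : Fin K → ℝ) (σ2 : ℝ) :
    (covR M K m θ p σ2).trace = (M:ℂ) * ((σ2 + ∑ k, p k : ℝ):ℂ) := by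
  unfold covR
  rw [Matrix.trace_add, Matrix.trace_smul, Matrix.trace_one]
  have hdiag : ∀ j : Fin M,
      (steering M K m θ * Matrix.diagonal (fun k => ((p k:ℝ):ℂ)) * (steering M K m θ)ᴴ).diag j
      = ∑ k, ((p k : ℝ):ℂ) := by
    intro j
    simp only [Matrix.diag_apply, Matrix.mul_apply, Matrix.conjTranspose_apply,
      Matrix.diagonal_apply, mul_ite, mul_zero, Finset.sum_ite_eq', Finset.mem_univ,
      if_true]
    refine Finset.sum_congr rfl fun k _ => ?_
    have h := steering_mul_star M K m θ j k
    linear_combination ((p k : ℝ):ℂ) * h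
  rw [Matrix.trace]
  rw [Finset.sum_congr rfl fun j _ => hdiag j]
  rw [Finset.sum_const, Finset.card_univ, Fintype.card_fin]
  rw [smul_eq_mul]
  push_cast
  ring

/-- Deterministic core of Theorem 1: identifiability from one-bit data
(determined by the normalized covariance) is equivalent to identifiability
from unquantized data (determined by the unnormalized covariance). -/
theorem identifiability_one_bit_iff_infinite_bit
    (M K : ℕ) (hM : 1 ≤ M) (hK : 1 ≤ K) (m : Fin M → ℤ)
    (θ θb : Fin K → ℝ)
    (hθ : ∀ k, θ k ∈ Set.Icc (-(Real.pi / 2)) (Real.pi / 2))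
    (hθb : ∀ k, θb k ∈ Set.Icc (-(Real.pi / 2)) (Real.pi / 2)) :
    (∃ (p pb : Fin K → ℝ) (σ2 σb2 : ℝ),
        (∀ k, 0 < p k) ∧ (∀ k, 0 < pb k) ∧ 0 < σ2 ∧ 0 < σb2 ∧
        covRbar M K m θ p σ2 = covRbar M K m θb pb σb2) ↔
    (∃ (q qb : Fin K → ℝ) (τ2 τb2 : ℝ),
        (∀ k, 0 < q k) ∧ (∀ k, 0 < qb k) ∧ 0 < τ2 ∧ 0 < τb2 ∧
        covR M K m θ q τ2 = covR M K m θb qb τb2) := by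
  haveI : Nonempty (Fin K) := ⟨⟨0, by omega⟩⟩
  constructor
  · rintro ⟨p, pb, σ2, σb2, hp, hpb, hσ2, hσb2, heq⟩
    have hc : 0 < σ2 + ∑ k, p k :=
      add_pos hσ2 (Finset.sum_pos (fun k _ => hp k) Finset.univ_nonempty)
    have hcb : 0 < σb2 + ∑ k, pb k :=
      add_pos hσb2 (Finset.sum_pos (fun k _ => hpb k) Finset.univ_nonempty)
    refine ⟨fun k => (σ2 + ∑ k, p k)⁻¹ * p k, fun k => (σb2 + ∑ k, pb k)⁻¹ * pb k,
      (σ2 + ∑ k, p k)⁻¹ * σ2, (σb2 + ∑ k, pb k)⁻¹ * σb2,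
      fun k => mul_pos (inv_pos.2 hc) (hp k), fun k => mul_pos (inv_pos.2 hcb) (hpb k),
      mul_pos (inv_pos.2 hc) hσ2, mul_pos (inv_pos.2 hcb) hσb2, ?_⟩
    rw [covR_smul, covR_smul]
    have h1 : (((σ2 + ∑ k, p k)⁻¹ : ℝ):ℂ) = (((σ2 + ∑ k, p k : ℝ)):ℂ)⁻¹ := by push_cast; ring
    have h2 : (((σb2 + ∑ k, pb k)⁻¹ : ℝ):ℂ) = (((σb2 + ∑ k, pb k : ℝ)):ℂ)⁻¹ := by push_cast; ring
    rw [h1, h2]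
    exact heq
  · rintro ⟨q, qb, τ2, τb2, hq, hqb, hτ2, hτb2, heq⟩
    refine ⟨q, qb, τ2, τb2, hq, hqb, hτ2, hτb2, ?_⟩
    have htr : (M:ℂ) * ((τ2 + ∑ k, q k : ℝ):ℂ) = (M:ℂ) * ((τb2 + ∑ k, qb k : ℝ):ℂ) := by
      rw [← trace_covR M K m θ q τ2, ← trace_covR M K m θb qb τb2, heq]
    have hM0 : (M:ℂ) ≠ 0 := by
      exact_mod_cast Nat.cast_ne_zero.2 (by omega)
    have hsum : ((τ2 + ∑ k, q k : ℝ):ℂ) = ((τb2 + ∑ k, qb k : ℝ):ℂ) :=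
      mul_left_cancel₀ hM0 htr
    unfold covRbar
    rw [hsum, heq]
end

section
/- Let A ∈ ℝ^{n×n} be a symmetric positive definite matrix all of whose entries satisfy |A_{ij}| ≤ 1. Then the matrix arcsin(A) obtained by applying the arcsine function entrywise, i.e. (arcsin A)_{ij} = arcsin(A_{ij}), is symmetric positive definite. (This is the key claim of Appendix C of the paper: the real representation R_x^r = (2/π)·arcsin(R̄^r) of the one-bit data covariance matrix is positive definite whenever the real representation R̄^r of the normalized unquantized covariance is positive definite, which in turn guarantees that R_x is positive definite and the worst-case Fisher information matrix is well defined.) -/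
/-!
Expanding `arcsin` in its Maclaurin series, `arcsin A = ∑ₖ cₖ A^{∘(2k+1)}` entrywise, where
`A^{∘m}` is the Hadamard power, `c₀ = 1` and all `cₖ ≥ 0`. By the Schur product theorem every
Hadamard power of the positive semidefinite matrix `A` is positive semidefinite, so the
quadratic form of `arcsin A` dominates that of `A`, which is positive.

The coefficients are nonnegative because `1 / √(1 - y)` is a binomial series with positive
coefficients; integrating it at `y = t²` gives the series of `arcsin` on `(-1, 1)`, and
nonnegativity also lets the series reach the endpoints `±1` by monotone convergence.
-/

open Real Set Filter Topology Matrix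
open scoped ComplexOrder

theorem hasSum_of_tendsto_of_hasSum {ι α : Type*} {l : Filter α} [l.NeBot] {f : ι → α → ℝ}
    {g : α → ℝ} {a : ι → ℝ} {s : ℝ} (hf : ∀ᶠ x in l, ∀ i, 0 ≤ f i x ∧ f i x ≤ a i)
    (hg : ∀ᶠ x in l, HasSum (fun i => f i x) (g x)) (hfa : ∀ i, Tendsto (f i) l (𝓝 (a i)))
    (hgs : Tendsto g l (𝓝 s)) : HasSum a s := by
  have ha : 0 ≤ a := fun i => ge_of_tendsto (hfa i) (hf.mono fun x hx => (hx i).1)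
  have hpartial : ∀ u : Finset ι, ∑ i ∈ u, a i ≤ s := fun u =>
    le_of_tendsto_of_tendsto (tendsto_finsetSum u fun i _ => hfa i) hgs <|
      (hf.and hg).mono fun x hx => sum_le_hasSum u (fun i _ => (hx.1 i).1) hx.2
  have hsum : Summable a := summable_of_sum_le ha hpartial
  have hle : s ≤ ∑' i, a i := le_of_tendsto hgs <|
    (hf.and hg).mono fun x hx => hasSum_le (fun i => (hx.1 i).2) hx.2 hsum.hasSum
  exact (hsum.tsum_le_of_sum_le hpartial).antisymm hle ▸ hsum.hasSum

lemma Ring.multichoose_pos {r : ℝ} (hr : 0 < r) (k : ℕ) : 0 < Ring.multichoose r k := by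
  have h := Ring.factorial_nsmul_multichoose_eq_ascPochhammer r k
  rw [Polynomial.ascPochhammer_smeval_cast, Polynomial.ascPochhammer_smeval_eq_eval,
    nsmul_eq_mul] at h
  exact pos_of_mul_pos_right (h ▸ ascPochhammer_pos k r hr) (Nat.cast_nonneg _)

theorem hasSum_multichoose_half_mul_pow {y : ℝ} (hy : |y| < 1) :
    HasSum (fun k => Ring.multichoose (2⁻¹ : ℝ) k * y ^ k) (1 / √(1 - y)) := by
  have := (one_div_one_sub_rpow_hasFPowerSeriesOnBall_zero 2⁻¹).hasSum (y := y)
    (by simpa [enorm_eq_nnnorm, ← NNReal.coe_lt_one] using hy)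
  simpa [FormalMultilinearSeries.ofScalars_apply_eq, Ring.multichoose_eq, sqrt_eq_rpow, mul_comm]
    using this

namespace Real

/-- `multichoose (1/2) k = (2k)! / (2ᵏ k!)²`, so these are the classical Maclaurin coefficients. -/
noncomputable def arcsinCoeff (k : ℕ) : ℝ := Ring.multichoose (2⁻¹ : ℝ) k / (2 * k + 1)

lemma arcsinCoeff_pos (k : ℕ) : 0 < arcsinCoeff k :=
  div_pos (Ring.multichoose_pos (by norm_num) k) (by positivity)

theorem arcsin_eq_integral {x : ℝ} (hx : |x| < 1) :
    arcsin x = ∫ t in (0 : ℝ)..x, 1 / √(1 - t ^ 2) := by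
  have hlt : ∀ t ∈ uIcc 0 x, |t| < 1 := fun t ht => by
    simpa using (abs_sub_left_of_mem_uIcc ht).trans_lt (by simpa using hx)
  rw [intervalIntegral.integral_eq_sub_of_hasDerivAt (f := arcsin), arcsin_zero, sub_zero]
  · intro t ht
    obtain ⟨h₁, h₂⟩ := abs_lt.1 (hlt t ht)
    exact hasDerivAt_arcsin h₁.ne' h₂.ne
  · refine ContinuousOn.intervalIntegrable (continuousOn_const.div (by fun_prop) fun t ht => ?_)
    exact (sqrt_pos.2 (sub_pos.2 ((sq_lt_one_iff_abs_lt_one t).2 (hlt t ht)))).ne'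

theorem hasSum_arcsin_of_abs_lt {x : ℝ} (hx : |x| < 1) :
    HasSum (fun k => arcsinCoeff k * x ^ (2 * k + 1)) (arcsin x) := by
  have habs : ∀ t ∈ uIoc 0 x, |t| ≤ |x| := fun t ht => by
    simpa using abs_sub_left_of_mem_uIcc (uIoc_subset_uIcc ht)
  have hsq : ∀ t : ℝ, |t| ≤ |x| → |t ^ 2| < 1 := fun t ht => by
    rw [abs_pow]; exact pow_lt_one₀ (abs_nonneg t) (ht.trans_lt hx) two_ne_zero
  have hterm : ∀ k, ∫ t in (0 : ℝ)..x, Ring.multichoose (2⁻¹ : ℝ) k * (t ^ 2) ^ k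
      = arcsinCoeff k * x ^ (2 * k + 1) := fun k => by
    simp_rw [← pow_mul, intervalIntegral.integral_const_mul, integral_pow, arcsinCoeff]
    push_cast; ring
  simp_rw [← hterm, arcsin_eq_integral hx]
  refine intervalIntegral.hasSum_integral_of_dominated_convergence
    (fun k _ => Ring.multichoose (2⁻¹ : ℝ) k * (x ^ 2) ^ k)
    (fun k => (by fun_prop : Continuous _).aestronglyMeasurable) (fun k => ?_)
    (.of_forall fun _ _ => (hasSum_multichoose_half_mul_pow (hsq x le_rfl)).summable)
    intervalIntegrable_const
    (.of_forall fun t ht => hasSum_multichoose_half_mul_pow (hsq t (habs t ht)))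
  refine .of_forall fun t ht => ?_
  rw [norm_mul, norm_of_nonneg (Ring.multichoose_pos (by norm_num) k).le, norm_pow,
    norm_of_nonneg (sq_nonneg t)]
  exact mul_le_mul_of_nonneg_left (pow_le_pow_left₀ (sq_nonneg t) (sq_le_sq.2 (habs t ht)) k)
    (Ring.multichoose_pos (by norm_num) k).le

theorem hasSum_arcsinCoeff : HasSum arcsinCoeff (π / 2) := by
  rw [← arcsin_one]
  refine hasSum_of_tendsto_of_hasSum (l := 𝓝[<] 1)
    (f := fun k x => arcsinCoeff k * x ^ (2 * k + 1)) ?_ ?_ (fun k => ?_)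
    continuous_arcsin.continuousWithinAt
  · filter_upwards [Ioo_mem_nhdsLT (zero_lt_one' ℝ)] with x hx k
    exact ⟨mul_nonneg (arcsinCoeff_pos k).le (pow_nonneg hx.1.le _),
      mul_le_of_le_one_right (arcsinCoeff_pos k).le (pow_le_one₀ hx.1.le hx.2.le)⟩
  · filter_upwards [Ioo_mem_nhdsLT (zero_lt_one' ℝ)] with x hx
    exact hasSum_arcsin_of_abs_lt (abs_lt.2 ⟨by linarith [hx.1], hx.2⟩)
  · have : Continuous fun x : ℝ => arcsinCoeff k * x ^ (2 * k + 1) := by fun_prop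
    simpa using (this.tendsto 1).mono_left nhdsWithin_le_nhds

theorem hasSum_arcsin {x : ℝ} (hx : |x| ≤ 1) :
    HasSum (fun k => arcsinCoeff k * x ^ (2 * k + 1)) (arcsin x) := by
  rcases hx.lt_or_eq with hx | hx
  · exact hasSum_arcsin_of_abs_lt hx
  rcases eq_or_eq_neg_of_abs_eq hx with rfl | rfl
  · simpa using hasSum_arcsinCoeff
  · simpa [arcsin_neg, pow_succ] using hasSum_arcsinCoeff.neg

end Real

theorem Matrix.PosSemidef.map_pow {𝕜 ι : Type*} [RCLike 𝕜] [Finite ι] {A : Matrix ι ι 𝕜}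
    (hA : A.PosSemidef) (m : ℕ) : (A.map (· ^ m)).PosSemidef := by
  induction m with
  | zero => simpa [vecMulVec, Matrix.map] using posSemidef_vecMulVec_self_star (1 : ι → 𝕜)
  | succ m ih =>
    convert ih.hadamard hA using 1
    ext i j; simp [pow_succ]

theorem Matrix.PosDef.of_hasSum {𝕜 ι β : Type*} [RCLike 𝕜] [Fintype ι] {M : β → Matrix ι ι 𝕜}
    {S : Matrix ι ι 𝕜} (hM : HasSum M S) (i : β) (hi : (M i).PosDef)
    (h : ∀ j ≠ i, (M j).PosSemidef) : S.PosDef := by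
  have hherm : ∀ j, (M j)ᴴ = M j := fun j => by
    rcases eq_or_ne j i with rfl | hj
    · exact hi.isHermitian
    · exact (h j hj).isHermitian
  refine posDef_iff_dotProduct_mulVec.2
    ⟨(hM.matrix_conjTranspose.unique (by simpa only [hherm] using hM) : Sᴴ = S), fun x hx => ?_⟩
  let q : Matrix ι ι 𝕜 →+ 𝕜 :=
    AddMonoidHom.mk' (fun N => star x ⬝ᵥ N *ᵥ x) fun N N' => by simp [add_mulVec, dotProduct_add]
  have hq : HasSum (fun j => star x ⬝ᵥ M j *ᵥ x) (star x ⬝ᵥ S *ᵥ x) :=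
    hM.map q (continuous_const.dotProduct (continuous_id.matrix_mulVec continuous_const))
  exact (hi.dotProduct_mulVec_pos hx).trans_le <|
    le_hasSum hq i fun j hj => (h j hj).dotProduct_mulVec_nonneg x

theorem Matrix.PosDef.map_of_hasSum_pow {ι β : Type*} [Fintype ι] {A : Matrix ι ι ℝ}
    (hA : A.PosDef) {f : ℝ → ℝ} {a : β → ℝ} {e : β → ℕ} (ha : ∀ k, 0 ≤ a k) {k₀ : β}
    (hk₀ : 0 < a k₀) (he : e k₀ = 1)
    (hf : ∀ i j, HasSum (fun k => a k * A i j ^ e k) (f (A i j))) : (A.map f).PosDef := by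
  refine PosDef.of_hasSum (M := fun k => a k • A.map (· ^ e k))
    (Pi.hasSum.2 fun i => Pi.hasSum.2 fun j => hf i j) k₀ ?_ fun k _ => ?_
  · simpa [he] using hA.smul hk₀
  · exact (hA.posSemidef.map_pow (e k)).smul (ha k)

/-- Key claim of Appendix C: if `A` is a real symmetric positive definite
matrix with all entries of absolute value at most 1, then the entrywise
arcsine `(arcsin A)_{ij} = arcsin(A_{ij})` is symmetric positive definite. -/
theorem entrywise_arcsin_posDef
    (n : ℕ) (A : Matrix (Fin n) (Fin n) ℝ) (hA : A.PosDef)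
    (hbound : ∀ i j, |A i j| ≤ 1) :
    (Matrix.of fun i j => Real.arcsin (A i j)).PosDef :=
  hA.map_of_hasSum_pow (fun k => (arcsinCoeff_pos k).le) (arcsinCoeff_pos 0) rfl
    fun i j => hasSum_arcsin (hbound i j)
end
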